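/- arXiv:2307.03439 — 9 statements merged into one kernel-verified Lean document; each statement's English description precedes it below -/
import Mathlib

section
/- Let Z(a,c) be the M×M zig-zag matrix built from a ∈ ℝ^M and c ∈ ℝ^{M-1}. Then for every E ∈ ℝ one has det(Z(a,c) − E·I) = ∏_{j=1}^M (a_j − E); equivalently, the characteristic polynomial of Z(a,c) is ∏_{j=1}^M (X − a_j), so the spectrum of Z(a,c) coincides with the M-tuple a_1, …, a_M (with multiplicity). -/
/-- The `M × M` zig-zag matrix `Z(a,c)` built from the (1-based) diagonal
parameters `a₁, …, a_M` and off-diagonal parameters `c₁, …, c_{M-1}`: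
`Z[i,i] = aᵢ` for all `i`; for every even (1-based) row index `i`,
`Z[i,i-1] = c_{i-1}` and (when `i+1 ≤ M`) `Z[i,i+1] = cᵢ`; all other
entries vanish.  (Rows/columns `i : Fin M` carry the 1-based label `i.val + 1`.) -/
def zigzag (M : ℕ) (a c : ℕ → ℝ) : Matrix (Fin M) (Fin M) ℝ :=
  Matrix.of fun i j =>
    if i.val = j.val then a (i.val + 1)
    else if (i.val + 1) % 2 = 0 ∧ j.val + 1 = i.val then c (j.val + 1)
    else if (i.val + 1) % 2 = 0 ∧ j.val = i.val + 1 then c (i.val + 1)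
    else 0

/-- Generic determinant lemma: if off-diagonal entries vanish whenever the
column index is odd or the row index is even (0-based), then the determinant
is the product of the diagonal entries. -/
lemma det_eq_prod_diag_of_zigzag_pattern {R : Type*} [CommRing R] {M : ℕ}
    (N : Matrix (Fin M) (Fin M) R)
    (hA : ∀ r c : Fin M, r ≠ c → c.val % 2 = 1 → N r c = 0)
    (hB : ∀ r c : Fin M, r ≠ c → r.val % 2 = 0 → N r c = 0) :
    N.det = ∏ i : Fin M, N i i := by
  rw [Matrix.det_apply]
  rw [Finset.sum_eq_single_of_mem (1 : Equiv.Perm (Fin M)) (Finset.mem_univ _)]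
  · simp
  · intro σ _ hσ
    have : ∃ i, σ i ≠ i := by
      by_contra h
      push_neg at h
      exact hσ (Equiv.ext h)
    obtain ⟨i, hi⟩ := this
    rcases Nat.mod_two_eq_zero_or_one i.val with he | ho
    · -- i even: use m = σ⁻¹ i, row i has even index
      have hm : σ (σ⁻¹ i) = i := Equiv.apply_symm_apply σ i
      have hne : σ⁻¹ i ≠ i := fun h => hi (by conv_lhs => rw [← h, hm])
      have hzero : N (σ (σ⁻¹ i)) (σ⁻¹ i) = 0 := by
        rw [hm]; exact hB i (σ⁻¹ i) (Ne.symm hne) he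
      rw [Finset.prod_eq_zero (Finset.mem_univ (σ⁻¹ i)) (f := fun x => N (σ x) x) hzero,
        smul_zero]
    · -- i odd: column i is odd
      have hzero : N (σ i) i = 0 := hA (σ i) i hi ho
      rw [Finset.prod_eq_zero (Finset.mem_univ i) (f := fun x => N (σ x) x) hzero, smul_zero]

lemma zigzag_off_diag (M : ℕ) (a c : ℕ → ℝ) (r s : Fin M) (h : r ≠ s)
    (hpar : s.val % 2 = 1 ∨ r.val % 2 = 0) :
    zigzag M a c r s = 0 := by
  have hv : r.val ≠ s.val := fun hv => h (Fin.ext hv)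
  simp only [zigzag, Matrix.of_apply]
  rw [if_neg hv, if_neg, if_neg] <;> omega

/-- The characteristic determinant of a zig-zag matrix factorizes through its
diagonal: `det (Z(a,c) - E·I) = ∏ⱼ (aⱼ - E)` for every `E`, and the
characteristic polynomial is `∏ⱼ (X - aⱼ)`, so the spectrum of `Z(a,c)` is the
`M`-tuple `a₁, …, a_M` (with multiplicity). -/
theorem zigzag_det_and_charpoly (M : ℕ) (a c : ℕ → ℝ) :
    (∀ E : ℝ,
      (zigzag M a c - E • (1 : Matrix (Fin M) (Fin M) ℝ)).det
        = ∏ j : Fin M, (a (j.val + 1) - E)) ∧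
    (zigzag M a c).charpoly
        = ∏ j : Fin M, (Polynomial.X - Polynomial.C (a (j.val + 1))) := by
  constructor
  · intro E
    have hdiag : ∀ j : Fin M,
        (zigzag M a c - E • (1 : Matrix (Fin M) (Fin M) ℝ)) j j = a (j.val + 1) - E := by
      intro j
      simp [zigzag, Matrix.sub_apply, Matrix.smul_apply, Matrix.one_apply]
    rw [det_eq_prod_diag_of_zigzag_pattern]
    · exact Finset.prod_congr rfl fun j _ => hdiag j
    · intro r s h ho
      simp [Matrix.sub_apply, Matrix.smul_apply, Matrix.one_apply_ne h,
        zigzag_off_diag M a c r s h (Or.inl ho)]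
    · intro r s h he
      simp [Matrix.sub_apply, Matrix.smul_apply, Matrix.one_apply_ne h,
        zigzag_off_diag M a c r s h (Or.inr he)]
  · rw [Matrix.charpoly, det_eq_prod_diag_of_zigzag_pattern]
    · refine Finset.prod_congr rfl fun j _ => ?_
      rw [Matrix.charmatrix_apply_eq]
      congr 1
      simp [zigzag]
    · intro r s h ho
      rw [Matrix.charmatrix_apply_ne _ _ _ h,
        zigzag_off_diag M a c r s h (Or.inl ho)]
      simp
    · intro r s h he
      rw [Matrix.charmatrix_apply_ne _ _ _ h,
        zigzag_off_diag M a c r s h (Or.inr he)]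
      simp
end

section
/- The product of two zig-zag matrices is again a zig-zag matrix: for a, b ∈ ℝ^M and c, d ∈ ℝ^{M-1} one has Z(a,c) · Z(b,d) = Z(u,v), where u_j = a_j b_j for j = 1,…,M, and, for k = 1,…,M−1, v_k = c_k b_k + a_{k+1} d_k when k is odd and v_k = a_k d_k + c_k b_{k+1} when k is even. -/
open Matrix

section OffDiag

variable {R : Type*} [Semiring R] {M : ℕ}

def zigzagOffDiag (M : ℕ) (c : ℕ → R) : Matrix (Fin M) (Fin M) R :=
  Matrix.of fun i j =>
    if (i.val + 1) % 2 = 0 ∧ j.val + 1 = i.val then c (j.val + 1)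
    else if (i.val + 1) % 2 = 0 ∧ j.val = i.val + 1 then c (i.val + 1)
    else 0

theorem zigzagOffDiag_apply_of_odd_row (c : ℕ → R) {i : Fin M} (hi : (i.val + 1) % 2 = 1)
    (j : Fin M) : zigzagOffDiag M c i j = 0 := by
  simp [zigzagOffDiag, hi]

theorem zigzagOffDiag_apply_of_even_col (c : ℕ → R) (i : Fin M) {j : Fin M}
    (hj : (j.val + 1) % 2 = 0) : zigzagOffDiag M c i j = 0 := by
  rw [zigzagOffDiag, of_apply, if_neg (by omega), if_neg (by omega)]

theorem zigzagOffDiag_mul_zigzagOffDiag (c d : ℕ → R) :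
    zigzagOffDiag M c * zigzagOffDiag M d = 0 := by
  ext i j : 1
  rw [mul_apply, Matrix.zero_apply]
  refine Finset.sum_eq_zero fun k _ => ?_
  rcases Nat.mod_two_eq_zero_or_one (k.val + 1) with hk | hk
  · rw [zigzagOffDiag_apply_of_even_col c i hk, zero_mul]
  · rw [zigzagOffDiag_apply_of_odd_row d hk, mul_zero]

theorem diagonal_mul_zigzagOffDiag_add_zigzagOffDiag_mul_diagonal (a c b d : ℕ → R) :
    diagonal (fun i : Fin M => a (i.val + 1)) * zigzagOffDiag M d
        + zigzagOffDiag M c * diagonal (fun i : Fin M => b (i.val + 1))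
      = zigzagOffDiag M (fun k => if k % 2 = 1 then c k * b k + a (k + 1) * d k
          else a k * d k + c k * b (k + 1)) := by
  ext i j
  simp only [Matrix.add_apply, diagonal_mul, mul_diagonal, zigzagOffDiag, of_apply]
  split_ifs with hsub hodd hsuper hodd'
  · rw [hsub.2, add_comm]
  · exact (hodd (by omega)).elim
  · omega
  · rw [hsuper.2]
  · rw [mul_zero, zero_mul, add_zero]

end OffDiag

theorem zigzag_eq_diagonal_add_zigzagOffDiag (M : ℕ) (a c : ℕ → ℝ) :
    zigzag M a c = diagonal (fun i : Fin M => a (i.val + 1)) + zigzagOffDiag M c := by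
  ext i j
  simp only [zigzag, zigzagOffDiag, of_apply, Matrix.add_apply, diagonal_apply, Fin.ext_iff]
  split_ifs <;> first | omega | simp

/-- The product of two zig-zag matrices is again a zig-zag matrix:
`Z(a,c) · Z(b,d) = Z(u,v)` with `uⱼ = aⱼ bⱼ` and, for `k = 1, …, M-1`,
`v_k = c_k b_k + a_{k+1} d_k` for odd `k` and `v_k = a_k d_k + c_k b_{k+1}`
for even `k`. -/
theorem zigzag_mul (M : ℕ) (a c b d : ℕ → ℝ) :
    zigzag M a c * zigzag M b d
      = zigzag M (fun j => a j * b j)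
          (fun k => if k % 2 = 1 then c k * b k + a (k + 1) * d k
                    else a k * d k + c k * b (k + 1)) := by
  rw [zigzag_eq_diagonal_add_zigzagOffDiag, zigzag_eq_diagonal_add_zigzagOffDiag,
    zigzag_eq_diagonal_add_zigzagOffDiag, add_mul, mul_add, mul_add,
    zigzagOffDiag_mul_zigzagOffDiag, add_zero, diagonal_mul_diagonal, add_assoc,
    diagonal_mul_zigzagOffDiag_add_zigzagOffDiag_mul_diagonal]
end

section
/- If a_j ≠ 0 for every j = 1,…,M, then the zig-zag matrix Z(a,c) is invertible and its inverse is again a zig-zag matrix: Z(a,c)^{-1} = Z(b,d), where b_j = 1/a_j for j = 1,…,M and d_k = −c_k/(a_k a_{k+1}) for k = 1,…,M−1; that is, Z(a,c) · Z(b,d) = I and Z(b,d) · Z(a,c) = I. -/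
section Ring

variable {R : Type*} [Ring R] {u v n : R}

theorem add_mul_sub_mul_mul_eq_one (huv : u * v = 1) (hn : n * v * n = 0) :
    (u + n) * (v - v * n * v) = 1 := by
  calc (u + n) * (v - v * n * v) = u * v - u * v * n * v + n * v - n * v * n * v := by
        noncomm_ring
    _ = 1 := by rw [huv, hn]; noncomm_ring

theorem sub_mul_mul_mul_add_eq_one (hvu : v * u = 1) (hn : n * v * n = 0) :
    (v - v * n * v) * (u + n) = 1 := by
  calc (v - v * n * v) * (u + n) = v * u + v * n - v * n * (v * u) - v * (n * v * n) := by
        noncomm_ring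
    _ = 1 := by rw [hvu, hn]; noncomm_ring

end Ring

namespace zigzag

open Matrix

variable {M : ℕ}

theorem eq_diagonal_add (a c : ℕ → ℝ) :
    zigzag M a c = diagonal (fun i : Fin M => a (i.val + 1)) + zigzag M 0 c := by
  ext i j
  simp only [zigzag, Matrix.add_apply, diagonal_apply, of_apply, Pi.zero_apply, ← Fin.ext_iff]
  split_ifs <;> first | rfl | simp

theorem zero_neg (c : ℕ → ℝ) : zigzag M 0 (-c) = -zigzag M 0 c := by
  ext i j
  simp only [zigzag, Matrix.neg_apply, of_apply, Pi.zero_apply, Pi.neg_apply]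
  split_ifs <;> simp

theorem odd_and_even_of_zero_apply_ne_zero {c : ℕ → ℝ} {i j : Fin M}
    (h : zigzag M 0 c i j ≠ 0) : i.val % 2 = 1 ∧ j.val % 2 = 0 := by
  simp only [zigzag, of_apply, Pi.zero_apply] at h
  split_ifs at h <;> first | exact absurd rfl h | omega

theorem zero_mul_diagonal_mul_zero (c : ℕ → ℝ) (e : Fin M → ℝ) :
    zigzag M 0 c * diagonal e * zigzag M 0 c = 0 := by
  ext i j
  rw [mul_apply, Matrix.zero_apply]
  refine Finset.sum_eq_zero fun k _ => ?_
  rw [mul_diagonal]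
  by_cases hik : zigzag M 0 c i k = 0
  · simp [hik]
  by_cases hkj : zigzag M 0 c k j = 0
  · simp [hkj]
  have := (odd_and_even_of_zero_apply_ne_zero hik).2
  have := (odd_and_even_of_zero_apply_ne_zero hkj).1
  omega

theorem diagonal_mul_zero_mul_diagonal (b c : ℕ → ℝ) :
    diagonal (fun i : Fin M => b (i.val + 1)) * zigzag M 0 c *
        diagonal (fun i : Fin M => b (i.val + 1)) =
      zigzag M 0 (fun k => b k * c k * b (k + 1)) := by
  ext i j
  simp only [mul_diagonal, diagonal_mul, zigzag, of_apply, Pi.zero_apply]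
  split_ifs with _ hleft hright
  · simp
  · rw [← hleft.2]; ring
  · rw [hright.2]
  · simp

theorem eq_diagonal_sub_diagonal_mul_zero_mul_diagonal (a c : ℕ → ℝ) :
    zigzag M (fun j => (a j)⁻¹) (fun k => -c k / (a k * a (k + 1))) =
      diagonal (fun i : Fin M => (a (i.val + 1))⁻¹) -
        diagonal (fun i : Fin M => (a (i.val + 1))⁻¹) * zigzag M 0 c *
          diagonal (fun i : Fin M => (a (i.val + 1))⁻¹) := by
  rw [eq_diagonal_add, diagonal_mul_zero_mul_diagonal (fun j => (a j)⁻¹), sub_eq_add_neg,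
    ← zero_neg]
  congr 2
  funext k
  simp only [Pi.neg_apply]
  ring

end zigzag

/-- If all diagonal entries `a₁, …, a_M` are nonzero then `Z(a,c)` is
invertible, and its inverse is the zig-zag matrix `Z(b,d)` with `bⱼ = 1/aⱼ`
and `d_k = -c_k/(a_k a_{k+1})`; that is, `Z(a,c) · Z(b,d) = I` and
`Z(b,d) · Z(a,c) = I`. -/
theorem zigzag_inv (M : ℕ) (a c : ℕ → ℝ)
    (ha : ∀ j, 1 ≤ j → j ≤ M → a j ≠ 0) :
    IsUnit (zigzag M a c) ∧
    zigzag M a c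
        * zigzag M (fun j => (a j)⁻¹) (fun k => -c k / (a k * a (k + 1))) = 1 ∧
    zigzag M (fun j => (a j)⁻¹) (fun k => -c k / (a k * a (k + 1)))
        * zigzag M a c = 1 ∧
    (zigzag M a c)⁻¹
        = zigzag M (fun j => (a j)⁻¹) (fun k => -c k / (a k * a (k + 1))) := by
  have hZ' := zigzag.eq_diagonal_sub_diagonal_mul_zero_mul_diagonal (M := M) a c
  have hZ := zigzag.eq_diagonal_add (M := M) a c
  set D := Matrix.diagonal fun i : Fin M => a (i.val + 1)
  set E := Matrix.diagonal fun i : Fin M => (a (i.val + 1))⁻¹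
  have ha' (i : Fin M) : a (i.val + 1) ≠ 0 := ha _ (by omega) (by omega)
  have hDE : D * E = 1 := by
    rw [Matrix.diagonal_mul_diagonal, ← Matrix.diagonal_one]
    exact congrArg Matrix.diagonal (funext fun i => mul_inv_cancel₀ (ha' i))
  have hED : E * D = 1 := by
    rw [Matrix.diagonal_mul_diagonal, ← Matrix.diagonal_one]
    exact congrArg Matrix.diagonal (funext fun i => inv_mul_cancel₀ (ha' i))
  have hN : zigzag M 0 c * E * zigzag M 0 c = 0 := zigzag.zero_mul_diagonal_mul_zero c _
  have hR : zigzag M a c * zigzag M _ _ = 1 := hZ ▸ hZ' ▸ add_mul_sub_mul_mul_eq_one hDE hN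
  have hL : zigzag M _ _ * zigzag M a c = 1 := hZ ▸ hZ' ▸ sub_mul_mul_mul_add_eq_one hED hN
  exact ⟨⟨⟨_, _, hR, hL⟩, rfl⟩, hR, hL, Matrix.inv_eq_right_inv hR⟩
end

section
/- Assume a_j ≠ 0 for every j = 1,…,M. Then Z(a,0) · Z(a,c)^{-1} · Z(a,0) = Z(a,−c), where Z(a,0) denotes the diagonal zig-zag matrix with off-diagonal vector 0 and −c is the entrywise negation of c. -/
namespace Matrix

variable {n R : Type*} [Fintype n] [DecidableEq n] [CommRing R]

theorem mul_inv_add_mul_eq_sub {D N : Matrix n n R} (hD : IsUnit D) (hN : N * D⁻¹ * N = 0) :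
    D * (D + N)⁻¹ * D = D - N := by
  have hdet : IsUnit D.det := (isUnit_iff_isUnit_det D).mp hD
  have hDD : D * D⁻¹ = 1 := mul_nonsing_inv D hdet
  have hD'D : D⁻¹ * D = 1 := nonsing_inv_mul D hdet
  have hright : (D + N) * (D⁻¹ * (D - N) * D⁻¹) = 1 :=
    calc (D + N) * (D⁻¹ * (D - N) * D⁻¹) = (D + N) * D⁻¹ * ((D - N) * D⁻¹) := by
          simp only [mul_assoc]
      _ = (1 + N * D⁻¹) * (1 - N * D⁻¹) := by rw [add_mul, sub_mul, hDD]
      _ = 1 - N * D⁻¹ * N * D⁻¹ := by noncomm_ring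
      _ = 1 := by rw [hN, zero_mul, sub_zero]
  calc D * (D + N)⁻¹ * D = D * D⁻¹ * (D - N) * (D⁻¹ * D) := by
        rw [inv_eq_right_inv hright]; simp only [mul_assoc]
    _ = D - N := by rw [hDD, hD'D, one_mul, mul_one]

end Matrix

open Matrix

theorem zigzag_zero_right (M : ℕ) (a : ℕ → ℝ) :
    zigzag M a (fun _ => 0) = diagonal fun i : Fin M => a (i.val + 1) := by
  ext i j
  by_cases h : i = j
  · simp [zigzag, h]
  · simp [zigzag, diagonal, h, Fin.val_ne_of_ne h]

theorem zigzag_eq_add (M : ℕ) (a c : ℕ → ℝ) :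
    zigzag M a c = zigzag M a (fun _ => 0) + zigzag M (fun _ => 0) c := by
  ext i j
  simp only [zigzag, Matrix.of_apply, Matrix.add_apply]
  split_ifs <;> simp_all

theorem zigzag_zero_neg (M : ℕ) (c : ℕ → ℝ) :
    zigzag M (fun _ => 0) (fun k => -c k) = -zigzag M (fun _ => 0) c := by
  ext i j
  simp only [zigzag, Matrix.of_apply, Matrix.neg_apply]
  split_ifs <;> simp

theorem zigzag_zero_apply_ne_zero {M : ℕ} {c : ℕ → ℝ} {i j : Fin M}
    (h : zigzag M (fun _ => 0) c i j ≠ 0) : i.val % 2 = 1 ∧ j.val % 2 = 0 := by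
  simp only [zigzag, Matrix.of_apply] at h
  split_ifs at h <;> simp_all <;> omega

theorem zigzag_zero_mul_diagonal_mul_self (M : ℕ) (c : ℕ → ℝ) (d : Fin M → ℝ) :
    zigzag M (fun _ => 0) c * diagonal d * zigzag M (fun _ => 0) c = 0 := by
  ext i k
  rw [mul_apply, Matrix.zero_apply]
  refine Finset.sum_eq_zero fun j _ => ?_
  rw [mul_diagonal]
  by_cases hij : zigzag M (fun _ => 0) c i j = 0
  · rw [hij, zero_mul, zero_mul]
  · have hjk : zigzag M (fun _ => 0) c j k = 0 := by
      by_contra hjk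
      have hj_even := (zigzag_zero_apply_ne_zero hij).2
      have hj_odd := (zigzag_zero_apply_ne_zero hjk).1
      omega
    rw [hjk, mul_zero]

/-- For `a₁, …, a_M` all nonzero, `Z(a,0) · Z(a,c)⁻¹ · Z(a,0) = Z(a,-c)`. -/
theorem zigzag_diag_inv_diag (M : ℕ) (a c : ℕ → ℝ)
    (ha : ∀ j, 1 ≤ j → j ≤ M → a j ≠ 0) :
    zigzag M a (fun _ => 0) * (zigzag M a c)⁻¹ * zigzag M a (fun _ => 0)
      = zigzag M a (fun k => -c k) := by
  have hD : IsUnit (zigzag M a (fun _ => 0)) := by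
    rw [zigzag_zero_right, isUnit_diagonal, Pi.isUnit_iff]
    exact fun i => (ha _ (by omega) (by omega)).isUnit
  have hN : zigzag M (fun _ => 0) c * (zigzag M a (fun _ => 0))⁻¹ * zigzag M (fun _ => 0) c
      = 0 := by
    rw [zigzag_zero_right, inv_diagonal]
    exact zigzag_zero_mul_diagonal_mul_self M c _
  rw [zigzag_eq_add M a c, mul_inv_add_mul_eq_sub hD hN, zigzag_eq_add M a (fun k => -c k),
    zigzag_zero_neg, sub_eq_add_neg]
end

section
/- Let H = Z(a,c) be an M×M zig-zag matrix. Then: (i) for every even n with 1 ≤ n ≤ M, the standard basis vector e_n satisfies H e_n = a_n e_n; (ii) for every odd n with 1 ≤ n ≤ M−1, assuming c_n ≠ 0 and (when n ≥ 3) a_{n-1} ≠ a_n, the vector ψ ∈ ℝ^M defined by ψ_{n-1} = −(a_n − a_{n+1}) c_{n-1} / ((a_{n-1} − a_n) c_n) (this entry present only when n ≥ 3), ψ_n = (a_n − a_{n+1})/c_n, ψ_{n+1} = 1, and ψ_j = 0 for all other j, satisfies H ψ = a_n ψ. -/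
/-!
`Z(a,c)` is the `M × M` truncation of a semi-infinite zig-zag operator on sequences, and the two
agree on the restriction to `Fin M` of any sequence vanishing at index `M`. Even columns of the
operator carry only their diagonal entry, so `eₙ` is an eigenvector for even `n`. For odd `n` the
column `n` also meets the rows `n - 1` and `n + 1`, which are the only nontrivial eigen-equations
for `ψ`: row `n + 1` reads `cₙ ψₙ + a_{n+1} = aₙ` and row `n - 1` reads
`a_{n-1} ψ_{n-1} + c_{n-1} ψₙ = aₙ ψ_{n-1}`; the prescribed entries are their solutions.
-/

open Matrix

/-- The semi-infinite zig-zag matrix acting on sequences `w : ℕ → ℝ`, indexed from `0` like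
`Fin M`: the paper's label `n` is index `n - 1`, so the rows with off-diagonal entries are the odd
indices `i`. -/
def zigzagOp (a c w : ℕ → ℝ) (i : ℕ) : ℝ :=
  a (i + 1) * w i + if i % 2 = 1 then c i * w (i - 1) + c (i + 1) * w (i + 1) else 0

theorem zigzag_mulVec_apply {M : ℕ} (a c w : ℕ → ℝ) (hw : w M = 0) (i : Fin M) :
    (zigzag M a c *ᵥ fun j => w j) i = zigzagOp a c w i := by
  obtain ⟨i, hi⟩ := i
  set g : ℕ → ℝ := fun k => (if k = i then a (i + 1) * w i else 0) +
    if i % 2 = 1 then (if k = i - 1 then c i * w (i - 1) else 0) +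
      (if k = i + 1 then c (i + 1) * w (i + 1) else 0) else 0
  have hentry : ∀ j : Fin M, zigzag M a c ⟨i, hi⟩ j * w j = g j := by
    rintro ⟨k, hk⟩
    simp only [zigzag, Matrix.of_apply, g]
    split_ifs <;> try simp only [add_zero, zero_add, zero_mul]
    all_goals first | omega | rfl | (congr 2 <;> omega)
  have hlast : (if i + 1 < M then c (i + 1) * w (i + 1) else 0) = c (i + 1) * w (i + 1) := by
    split_ifs with h
    · rfl
    · rw [show i + 1 = M by omega, hw, mul_zero]
  rw [mulVec, dotProduct, Finset.sum_congr rfl fun j _ => hentry j, Fin.sum_univ_eq_sum_range g]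
  simp only [g, Finset.sum_add_distrib, Finset.sum_ite_irrel, Finset.sum_ite_eq', Finset.mem_range,
    Finset.sum_const_zero]
  rw [if_pos hi, if_pos (by omega : i - 1 < M), hlast]
  rfl

theorem zigzag_mulVec_eq_smul {M : ℕ} {a c w : ℕ → ℝ} {μ : ℝ} (hw : w M = 0)
    (h : zigzagOp a c w = μ • w) : zigzag M a c *ᵥ (fun i => w i) = μ • fun i : Fin M => w i := by
  funext i
  rw [zigzag_mulVec_apply a c w hw, h]
  rfl

theorem zigzagOp_basis {a c : ℕ → ℝ} {n : ℕ} (hn : n % 2 = 0) :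
    zigzagOp a c (fun k => if k + 1 = n then 1 else 0) = a n • fun k => if k + 1 = n then 1 else 0 := by
  funext i
  simp only [zigzagOp, Pi.smul_apply, smul_eq_mul]
  split_ifs <;> first | omega | (subst_vars; ring)

noncomputable def zigzagPsi (a c : ℕ → ℝ) (n : ℕ) (k : ℕ) : ℝ :=
  if k + 2 = n then -((a n - a (n + 1)) * c (n - 1)) / ((a (n - 1) - a n) * c n)
  else if k + 1 = n then (a n - a (n + 1)) / c n
  else if k = n then 1
  else 0

theorem zigzagOp_psi {a c : ℕ → ℝ} {n : ℕ} (hn : n % 2 = 1) (hc : c n ≠ 0)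
    (ha : 3 ≤ n → a (n - 1) ≠ a n) : zigzagOp a c (zigzagPsi a c n) = a n • zigzagPsi a c n := by
  funext i
  rw [Pi.smul_apply, smul_eq_mul]
  obtain rfl | rfl | rfl | hi : i + 2 = n ∨ i + 1 = n ∨ i = n ∨ (i + 2 ≠ n ∧ i + 1 ≠ n ∧ i ≠ n) := by
    omega
  all_goals simp (disch := omega) only [zigzagOp, zigzagPsi, if_pos, if_neg, if_true,
    Nat.reduceSubDiff, mul_zero, mul_one, add_zero]
  · have hgap : a (i + 1) - a (i + 2) ≠ 0 := sub_ne_zero.2 (ha (by omega))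
    field_simp
    ring
  · field_simp
    ring
  · simp

/-- Eigenvectors of the zig-zag Hamiltonian `H = Z(a,c)` (1-based labels):
(i) for every even `n` with `1 ≤ n ≤ M`, the standard basis vector `eₙ`
satisfies `H eₙ = aₙ eₙ`;
(ii) for every odd `n` with `1 ≤ n ≤ M-1`, provided `cₙ ≠ 0` and (when
`n ≥ 3`) `a_{n-1} ≠ aₙ`, the vector `ψ` with
`ψ_{n-1} = -(aₙ - a_{n+1}) c_{n-1} / ((a_{n-1} - aₙ) cₙ)` (entry present
only when `n ≥ 3`), `ψₙ = (aₙ - a_{n+1})/cₙ`, `ψ_{n+1} = 1` and all other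
entries zero satisfies `H ψ = aₙ ψ`. -/
theorem zigzag_eigenvectors (M : ℕ) (a c : ℕ → ℝ) :
    (∀ n : ℕ, n % 2 = 0 → 1 ≤ n → n ≤ M →
      (zigzag M a c).mulVec (fun i => if i.val + 1 = n then (1 : ℝ) else 0)
        = a n • fun i : Fin M => if i.val + 1 = n then (1 : ℝ) else 0) ∧
    (∀ n : ℕ, n % 2 = 1 → 1 ≤ n → n + 1 ≤ M → c n ≠ 0 →
      (3 ≤ n → a (n - 1) ≠ a n) →
      ∀ ψ : Fin M → ℝ,
        ψ = (fun i =>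
          if i.val + 2 = n then
            -((a n - a (n + 1)) * c (n - 1)) / ((a (n - 1) - a n) * c n)
          else if i.val + 1 = n then (a n - a (n + 1)) / c n
          else if i.val = n then 1
          else 0) →
        (zigzag M a c).mulVec ψ = a n • ψ) := by
  refine ⟨fun n hn _ hnM => zigzag_mulVec_eq_smul ?_ (zigzagOp_basis hn),
    fun n hn _ hnM hc ha ψ hψ => hψ ▸ zigzag_mulVec_eq_smul ?_ (zigzagOp_psi hn hc ha)⟩
  · exact if_neg (by omega)
  · rw [zigzagPsi, if_neg (by omega), if_neg (by omega), if_neg (by omega)]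
end

section
/- Let H = Z(a,c) be an M×M zig-zag matrix and assume a_k ≠ a_{k+1} for every k = 1,…,M−1. Let 𝟙 ∈ ℝ^M be the all-ones vector and define q ∈ ℝ^{M-1} by q_k = (−1)^{k+1} c_k/(a_k − a_{k+1}) (i.e., q_k = c_k/(a_k − a_{k+1}) for odd k and q_k = −c_k/(a_k − a_{k+1}) for even k). Then H · Z(𝟙,q) = Z(𝟙,q) · D, where D is the diagonal matrix with diagonal entries a_1,…,a_M; equivalently, for each n = 1,…,M the n-th column of Z(𝟙,q) is an eigenvector of H with eigenvalue a_n, normalized to have n-th entry equal to 1. -/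
lemma zig_even {M : ℕ} {a c : ℕ → ℝ} {i j : Fin M} (h : i.val % 2 = 0) :
    zigzag M a c i j = if i.val = j.val then a (i.val + 1) else 0 := by
  have h2 : ¬ ((i.val + 1) % 2 = 0) := by omega
  simp [zigzag, h2]

lemma zig_odd {M : ℕ} {a c : ℕ → ℝ} {i j : Fin M} (h : i.val % 2 = 1) :
    zigzag M a c i j =
      if i.val = j.val then a (i.val + 1)
      else if j.val + 1 = i.val then c (j.val + 1)
      else if j.val = i.val + 1 then c (i.val + 1)
      else 0 := by
  have h2 : (i.val + 1) % 2 = 0 := by omega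
  simp [zigzag, h2]

/-- Diagonalization of the zig-zag Hamiltonian `H = Z(a,c)`: if
`a_k ≠ a_{k+1}` for `k = 1, …, M-1` and `q_k = (-1)^{k+1} c_k/(a_k - a_{k+1})`,
then `H · Z(𝟙,q) = Z(𝟙,q) · D` with `D = diag(a₁, …, a_M)`; i.e. the `n`-th
column of `Z(𝟙,q)` is an eigenvector of `H` with eigenvalue `aₙ`, normalized
to have `n`-th entry `1`. -/
theorem zigzag_eigvec_matrix (M : ℕ) (a c : ℕ → ℝ)
    (ha : ∀ k, 1 ≤ k → k + 1 ≤ M → a k ≠ a (k + 1)) :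
    zigzag M a c
        * zigzag M (fun _ => 1)
            (fun k => (-1 : ℝ) ^ (k + 1) * c k / (a k - a (k + 1)))
      = zigzag M (fun _ => 1)
            (fun k => (-1 : ℝ) ^ (k + 1) * c k / (a k - a (k + 1)))
        * Matrix.diagonal (fun i : Fin M => a (i.val + 1)) := by
  set q : ℕ → ℝ := fun k => (-1 : ℝ) ^ (k + 1) * c k / (a k - a (k + 1)) with hq
  set Q : Matrix (Fin M) (Fin M) ℝ := zigzag M (fun _ => 1) q with hQ
  ext i j
  rw [Matrix.mul_apply, Matrix.mul_diagonal]
  rcases i with ⟨n, hiM⟩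
  rcases Nat.even_or_odd n with he | ho
  · -- even (0-based) row
    rw [Nat.even_iff] at he
    have he' : (⟨n, hiM⟩ : Fin M).val % 2 = 0 := he
    have hz : ∀ k : Fin M, zigzag M a c ⟨n, hiM⟩ k * Q k j
        = if k = ⟨n, hiM⟩ then a (n + 1) * Q k j else 0 := by
      intro k
      rw [zig_even he']
      by_cases hk : k = ⟨n, hiM⟩
      · subst hk; simp
      · have : ¬ (n = k.val) := by
          intro h; exact hk (Fin.ext h.symm)
        simp only [Fin.val_mk, this, if_false, zero_mul, hk]
    rw [Finset.sum_congr rfl fun k _ => hz k]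
    simp only [Finset.sum_ite_eq', Finset.mem_univ, if_true]
    rw [hQ, zig_even he']
    by_cases hij : n = j.val
    · simp [hij]
    · simp [hij]
  · -- odd row
    rw [Nat.odd_iff] at ho
    have ho' : (⟨n, hiM⟩ : Fin M).val % 2 = 1 := ho
    have h1 : 1 ≤ n := by omega
    have hpn : n - 1 < M := by omega
    have hpe : ((⟨n - 1, hpn⟩ : Fin M)).val % 2 = 0 := by
      simp only [Fin.val_mk]; omega
    have hqn : q n * (a n - a (n + 1)) = c n := by
      have hne : a n - a (n + 1) ≠ 0 := sub_ne_zero.mpr (ha n h1 (by omega))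
      have hpow : (-1 : ℝ) ^ (n + 1) = 1 :=
        Even.neg_one_pow (Nat.even_iff.mpr (by omega))
      show (-1 : ℝ) ^ (n + 1) * c n / (a n - a (n + 1)) * (a n - a (n + 1)) = c n
      rw [hpow, one_mul, div_mul_cancel₀ _ hne]
    by_cases hs : n + 1 < M
    · have hse : ((⟨n + 1, hs⟩ : Fin M)).val % 2 = 0 := by
        simp only [Fin.val_mk]; omega
      have hqs : q (n + 1) * (a (n + 2) - a (n + 1)) = c (n + 1) := by
        have hne : a (n + 1) - a (n + 2) ≠ 0 :=
          sub_ne_zero.mpr (ha (n + 1) (by omega) (by omega))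
        have hpow : (-1 : ℝ) ^ (n + 2) = -1 :=
          Odd.neg_one_pow (Nat.odd_iff.mpr (by omega))
        show (-1 : ℝ) ^ (n + 2) * c (n + 1) / (a (n + 1) - a (n + 2)) * (a (n + 2) - a (n + 1)) = c (n + 1)
        rw [hpow, div_mul_eq_mul_div, div_eq_iff hne]; ring
      have key : ∀ k : Fin M, zigzag M a c ⟨n, hiM⟩ k * Q k j
          = (if k = ⟨n - 1, hpn⟩ then c n * Q k j else 0)
            + (if k = ⟨n, hiM⟩ then a (n + 1) * Q k j else 0)
            + (if k = ⟨n + 1, hs⟩ then c (n + 1) * Q k j else 0) := by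
        intro k
        rw [zig_odd ho']
        rcases k with ⟨m, hm⟩
        simp only [Fin.mk.injEq, Fin.val_mk]
        by_cases hm1 : m = n - 1
        · simp only [hm1]
          have e1 : ¬ (n = n - 1) := by omega
          have e2 : n - 1 + 1 = n := by omega
          have e3 : ¬ (n - 1 = n) := by omega
          have e4 : ¬ (n - 1 = n + 1) := by omega
          simp only [e1, e2, e3, e4, if_true, if_false, add_zero, zero_add]
        · by_cases hm2 : m = n
          · simp only [hm2]
            have e2 : ¬ (n = n - 1) := by omega
            have e3 : ¬ (n = n + 1) := by omega
            simp only [e2, e3, if_true, if_false, if_pos rfl, add_zero, zero_add]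
          · by_cases hm3 : m = n + 1
            · simp only [hm3]
              have e1 : ¬ (n = n + 1) := by omega
              have e2 : ¬ (n + 1 + 1 = n) := by omega
              have e4 : ¬ (n + 1 = n - 1) := by omega
              have e5 : ¬ (n + 1 = n) := by omega
              simp only [e1, e2, e4, e5, if_true, if_false, if_pos rfl,
                add_zero, zero_add]
            · have e1 : ¬ (n = m) := by omega
              have e2 : ¬ (m + 1 = n) := by omega
              simp only [e1, e2, hm1, hm2, hm3, if_false, zero_mul, add_zero]
      rw [Finset.sum_congr rfl fun k _ => key k]
      rw [Finset.sum_add_distrib, Finset.sum_add_distrib]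
      simp only [Finset.sum_ite_eq', Finset.mem_univ, if_true]
      rw [hQ, zig_even hpe, zig_even hse, zig_odd ho']
      simp only [Fin.val_mk]
      by_cases hj1 : j.val = n - 1
      · simp only [hj1]
        have e2 : ¬ (n + 1 = n - 1) := by omega
        have e3 : ¬ (n = n - 1) := by omega
        have e4 : n - 1 + 1 = n := by omega
        simp only [e2, e3, e4, if_true, if_false, if_pos rfl, mul_one,
          mul_zero, add_zero, zero_add]
        linear_combination -hqn
      · by_cases hj2 : j.val = n
        · simp only [hj2]
          have e1 : ¬ (n - 1 = n) := by omega
          have e2 : ¬ (n + 1 = n) := by omega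
          simp only [e1, e2, if_true, if_false, if_pos rfl, mul_one,
            mul_zero, add_zero, zero_add]
          ring
        · by_cases hj3 : j.val = n + 1
          · simp only [hj3]
            have e1 : ¬ (n - 1 = n + 1) := by omega
            have e3 : ¬ (n = n + 1) := by omega
            have e4 : ¬ (n + 1 + 1 = n) := by omega
            simp only [e1, e3, e4, if_true, if_false, if_pos rfl, mul_one,
              mul_zero, add_zero, zero_add]
            linear_combination -hqs
          · have e1 : ¬ (n - 1 = j.val) := by omega
            have e2 : ¬ (n + 1 = j.val) := by omega
            have e3 : ¬ (n = j.val) := by omega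
            have e4 : ¬ (j.val + 1 = n) := by omega
            have e5 : ¬ (j.val = n + 1) := by omega
            simp [e1, e2, e3, e4, e5]
    · -- n + 1 = M : last row, odd
      have key : ∀ k : Fin M, zigzag M a c ⟨n, hiM⟩ k * Q k j
          = (if k = ⟨n - 1, hpn⟩ then c n * Q k j else 0)
            + (if k = ⟨n, hiM⟩ then a (n + 1) * Q k j else 0) := by
        intro k
        rw [zig_odd ho']
        rcases k with ⟨m, hm⟩
        simp only [Fin.mk.injEq, Fin.val_mk]
        by_cases hm1 : m = n - 1
        · simp only [hm1]
          have e1 : ¬ (n = n - 1) := by omega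
          have e2 : n - 1 + 1 = n := by omega
          have e3 : ¬ (n - 1 = n) := by omega
          simp only [e1, e2, e3, if_true, if_false, add_zero, zero_add]
        · by_cases hm2 : m = n
          · simp only [hm2]
            have e2 : ¬ (n = n - 1) := by omega
            simp only [e2, if_true, if_false, if_pos rfl, add_zero, zero_add]
          · have e1 : ¬ (n = m) := by omega
            have e2 : ¬ (m + 1 = n) := by omega
            have e3 : ¬ (m = n + 1) := by omega
            simp only [e1, e2, e3, hm1, hm2, if_false, zero_mul, add_zero]
      rw [Finset.sum_congr rfl fun k _ => key k]
      rw [Finset.sum_add_distrib]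
      simp only [Finset.sum_ite_eq', Finset.mem_univ, if_true]
      rw [hQ, zig_even hpe, zig_odd ho']
      simp only [Fin.val_mk]
      by_cases hj1 : j.val = n - 1
      · simp only [hj1]
        have e3 : ¬ (n = n - 1) := by omega
        have e4 : n - 1 + 1 = n := by omega
        simp only [e3, e4, if_true, if_false, if_pos rfl, mul_one,
          mul_zero, add_zero, zero_add]
        linear_combination -hqn
      · by_cases hj2 : j.val = n
        · simp only [hj2]
          have e1 : ¬ (n - 1 = n) := by omega
          simp only [e1, if_true, if_false, if_pos rfl, mul_one,
            mul_zero, add_zero, zero_add]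
          ring
        · have e1 : ¬ (n - 1 = j.val) := by omega
          have e3 : ¬ (n = j.val) := by omega
          have e4 : ¬ (j.val + 1 = n) := by omega
          have e5 : ¬ (j.val = n + 1) := by omega
          simp [e1, e3, e4, e5]
end

section
/- Let H = Z(a,c) be an M×M zig-zag matrix and assume a_k ≠ a_{k+1} for every k = 1,…,M−1. Let 𝟙 ∈ ℝ^M be the all-ones vector and define q ∈ ℝ^{M-1} by q_k = (−1)^k c_k/(a_k − a_{k+1}) (i.e., q_k = −c_k/(a_k − a_{k+1}) for odd k and q_k = c_k/(a_k − a_{k+1}) for even k). Then H^T · (Z(𝟙,q))^T = (Z(𝟙,q))^T · D, where D is the diagonal matrix with diagonal entries a_1,…,a_M; equivalently, for each n = 1,…,M the n-th column of (Z(𝟙,q))^T is an eigenvector of the transposed Hamiltonian H^T with eigenvalue a_n, normalized to have n-th entry equal to 1. -/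
open Matrix

/-!
Write `Z(a,c) = D + C` with `D = diag(a)`, `C = Z(0,c)`, and `Z(𝟙,q) = 1 + N` with `N = Z(0,q)`.
The nonzero entries of a zig-zag matrix with zero diagonal lie in even rows and odd columns
(1-based), so `N * C = 0`. The commutator `D N - N D` has entries `(aᵢ - aⱼ) Nᵢⱼ`, and `q` is
chosen exactly so that it equals `C`. Hence `Z(𝟙,q) Z(a,c) = D + C + N D = D + D N = D Z(𝟙,q)`,
and transposing gives the theorem.
-/

theorem one_add_mul_add_eq_mul_one_add {R : Type*} [Ring R] {d n c : R} (hnc : n * c = 0)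
    (hc : d * n - n * d = c) : (1 + n) * (d + c) = d * (1 + n) := by
  rw [add_mul, one_mul, mul_add, hnc, add_zero, ← hc]
  noncomm_ring

section zigzag

variable {M : ℕ}

theorem zigzag_eq_diagonal_add_zigzag_zero (a c : ℕ → ℝ) :
    zigzag M a c = diagonal (fun i : Fin M => a (i.val + 1)) + zigzag M 0 c := by
  ext i j
  simp only [zigzag, of_apply, Matrix.add_apply, diagonal_apply, Pi.zero_apply, Fin.ext_iff]
  split_ifs <;> ring

theorem zigzag_congr_right {a c c' : ℕ → ℝ}
    (h : ∀ k, 1 ≤ k → k + 1 ≤ M → c k = c' k) : zigzag M a c = zigzag M a c' := by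
  ext i j
  simp only [zigzag, of_apply]
  split_ifs <;> first | rfl | (apply h <;> omega)

theorem zigzag_zero_mul_zigzag_zero (c c' : ℕ → ℝ) : zigzag M 0 c * zigzag M 0 c' = 0 := by
  ext i j
  rw [mul_apply]
  refine Finset.sum_eq_zero fun k _ => ?_
  simp only [zigzag, of_apply, Pi.zero_apply]
  split_ifs <;> first | ring1 | (exfalso; omega)

theorem diagonal_mul_zigzag_zero_sub (a q : ℕ → ℝ) :
    diagonal (fun i : Fin M => a (i.val + 1)) * zigzag M 0 q
        - zigzag M 0 q * diagonal (fun i : Fin M => a (i.val + 1))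
      = zigzag M 0 (fun k => (-1 : ℝ) ^ k * (a k - a (k + 1)) * q k) := by
  ext i j
  simp only [Matrix.sub_apply, diagonal_mul, mul_diagonal, zigzag, of_apply, Pi.zero_apply]
  split_ifs with hij hlo hhi
  · simp [hij]
  · obtain ⟨hi_odd, hi⟩ := hlo
    rw [Odd.neg_one_pow (Nat.odd_iff.mpr (by omega)), hi]
    ring
  · obtain ⟨hi_odd, hj⟩ := hhi
    rw [Even.neg_one_pow (Nat.even_iff.mpr hi_odd), hj]
    ring
  · ring

theorem zigzag_one_mul_zigzag (a c : ℕ → ℝ) (ha : ∀ k, 1 ≤ k → k + 1 ≤ M → a k ≠ a (k + 1)) :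
    zigzag M (fun _ => 1) (fun k => (-1 : ℝ) ^ k * c k / (a k - a (k + 1))) * zigzag M a c
      = diagonal (fun i : Fin M => a (i.val + 1))
        * zigzag M (fun _ => 1) (fun k => (-1 : ℝ) ^ k * c k / (a k - a (k + 1))) := by
  have hcomm : diagonal (fun i : Fin M => a (i.val + 1))
        * zigzag M 0 (fun k => (-1 : ℝ) ^ k * c k / (a k - a (k + 1)))
      - zigzag M 0 (fun k => (-1 : ℝ) ^ k * c k / (a k - a (k + 1)))
        * diagonal (fun i : Fin M => a (i.val + 1)) = zigzag M 0 c := by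
    rw [diagonal_mul_zigzag_zero_sub]
    refine zigzag_congr_right fun k hk hkM => ?_
    have hgap : a k - a (k + 1) ≠ 0 := sub_ne_zero.mpr (ha k hk hkM)
    field_simp
    rw [pow_right_comm, neg_one_sq, one_pow, one_mul]
  rw [zigzag_eq_diagonal_add_zigzag_zero (fun _ => 1), zigzag_eq_diagonal_add_zigzag_zero a c,
    diagonal_one]
  exact one_add_mul_add_eq_mul_one_add (zigzag_zero_mul_zigzag_zero _ _) hcomm

end zigzag

/-- Diagonalization of the transposed zig-zag Hamiltonian `Hᵀ = Z(a,c)ᵀ`: if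
`a_k ≠ a_{k+1}` for `k = 1, …, M-1` and `q_k = (-1)^k c_k/(a_k - a_{k+1})`,
then `Hᵀ · Z(𝟙,q)ᵀ = Z(𝟙,q)ᵀ · D` with `D = diag(a₁, …, a_M)`; i.e. the
`n`-th column of `Z(𝟙,q)ᵀ` is an eigenvector of `Hᵀ` with eigenvalue `aₙ`,
normalized to have `n`-th entry `1`. -/
theorem zigzag_transpose_eigvec_matrix (M : ℕ) (a c : ℕ → ℝ)
    (ha : ∀ k, 1 ≤ k → k + 1 ≤ M → a k ≠ a (k + 1)) :
    (zigzag M a c)ᵀ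
        * (zigzag M (fun _ => 1)
            (fun k => (-1 : ℝ) ^ k * c k / (a k - a (k + 1))))ᵀ
      = (zigzag M (fun _ => 1)
            (fun k => (-1 : ℝ) ^ k * c k / (a k - a (k + 1))))ᵀ
        * Matrix.diagonal (fun i : Fin M => a (i.val + 1)) := by
  rw [← transpose_mul, zigzag_one_mul_zigzag a c ha, transpose_mul, diagonal_transpose]
end

section
/- Let H = Z(a,c) be an M×M zig-zag matrix with a_k ≠ a_{k+1} for k = 1,…,M−1, define q ∈ ℝ^{M-1} by q_k = (−1)^k c_k/(a_k − a_{k+1}), let 𝟙 ∈ ℝ^M be the all-ones vector, and set K = (Z(𝟙,q))^T. If κ ∈ ℝ^M has κ_n > 0 for every n, then Θ(κ) = K · diag(κ_1,…,κ_M) · K^T is a symmetric positive-definite (in particular invertible) matrix, i.e., a metric making H quasi-Hermitian. -/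
open Matrix

lemma zigzag_split (M : ℕ) (a c : ℕ → ℝ) :
    zigzag M a c
      = Matrix.diagonal (fun i : Fin M => a (i.val + 1)) + zigzag M (fun _ => 0) c := by
  ext i j
  by_cases h : i = j
  · subst h
    simp [zigzag, Matrix.diagonal_apply]
  · have h' : ¬ i.val = j.val := fun hv => h (Fin.ext hv)
    simp [zigzag, Matrix.diagonal_apply, h, h']

lemma zigzag_off_mul (M : ℕ) (c d : ℕ → ℝ) :
    zigzag M (fun _ => 0) c * zigzag M (fun _ => 0) d = 0 := by
  ext i j
  simp only [Matrix.mul_apply, Matrix.zero_apply, zigzag, Matrix.of_apply]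
  apply Finset.sum_eq_zero
  intro k _
  split_ifs <;> first | ring1 | (exfalso; omega)

lemma zigzag_key (M : ℕ) (a c : ℕ → ℝ)
    (ha : ∀ k, 1 ≤ k → k + 1 ≤ M → a k ≠ a (k + 1)) :
    Matrix.diagonal (fun i : Fin M => a (i.val + 1))
        * zigzag M (fun _ => 0) (fun k => (-1 : ℝ) ^ k * c k / (a k - a (k + 1)))
      - zigzag M (fun _ => 0) (fun k => (-1 : ℝ) ^ k * c k / (a k - a (k + 1)))
        * Matrix.diagonal (fun i : Fin M => a (i.val + 1))
      = zigzag M (fun _ => 0) c := by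
  ext i j
  simp only [Matrix.sub_apply, Matrix.diagonal_mul, Matrix.mul_diagonal, zigzag,
    Matrix.of_apply]
  split_ifs with h1 h2 h3
  · ring
  · -- j.val + 1 = i.val, even (1-based) row i
    obtain ⟨he, hji⟩ := h2
    have hkodd : (j.val + 1) % 2 = 1 := by omega
    have hne : a (j.val + 1) - a (j.val + 1 + 1) ≠ 0 :=
      sub_ne_zero.mpr (ha (j.val + 1) (by omega) (by omega))
    have hiv : i.val + 1 = j.val + 1 + 1 := by omega
    rw [hiv]
    have hpow : (-1 : ℝ) ^ (j.val + 1) = -1 :=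
      Odd.neg_one_pow (Nat.odd_iff.mpr hkodd)
    rw [hpow]
    field_simp
    ring
  · -- j.val = i.val + 1, even (1-based) row i
    obtain ⟨he, hji⟩ := h3
    have hkeven : (i.val + 1) % 2 = 0 := he
    have hne : a (i.val + 1) - a (i.val + 1 + 1) ≠ 0 :=
      sub_ne_zero.mpr (ha (i.val + 1) (by omega) (by omega))
    have hjv : j.val + 1 = i.val + 1 + 1 := by omega
    rw [hjv]
    have hpow : (-1 : ℝ) ^ (i.val + 1) = 1 :=
      Even.neg_one_pow (Nat.even_iff.mpr hkeven)
    rw [hpow]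
    field_simp
  · ring

lemma posDef_conj {n : Type*} [Fintype n] [DecidableEq n] {A B : Matrix n n ℝ}
    (hA : A.PosDef) (hB : IsUnit B) : (Bᴴ * A * B).PosDef := by
  refine Matrix.PosDef.of_dotProduct_mulVec_pos (Matrix.isHermitian_conjTranspose_mul_mul B hA.1) fun x hx => ?_
  have hBx : B *ᵥ x ≠ 0 := by
    intro h
    exact hx (Matrix.mulVec_injective_iff_isUnit.mpr hB (by simp [h]))
  simpa only [star_mulVec, dotProduct_mulVec, vecMul_vecMul] using hA.dotProduct_mulVec_pos hBx

/-- With `a_k ≠ a_{k+1}` for `k = 1, …, M-1`,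
`q_k = (-1)^k c_k/(a_k - a_{k+1})` and `K = Z(𝟙,q)ᵀ`: if `κₙ > 0` for every
`n = 1, …, M`, then `Θ(κ) = K · diag(κ₁, …, κ_M) · Kᵀ` is a symmetric
positive-definite (in particular invertible) matrix, i.e. a metric making the
zig-zag Hamiltonian `H = Z(a,c)` quasi-Hermitian. -/
theorem zigzag_metric_posDef (M : ℕ) (a c κ : ℕ → ℝ)
    (ha : ∀ k, 1 ≤ k → k + 1 ≤ M → a k ≠ a (k + 1))
    (hκ : ∀ n, 1 ≤ n → n ≤ M → 0 < κ n) :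
    ∀ K Θ : Matrix (Fin M) (Fin M) ℝ,
      K = (zigzag M (fun _ => 1)
            (fun k => (-1 : ℝ) ^ k * c k / (a k - a (k + 1))))ᵀ →
      Θ = K * Matrix.diagonal (fun i : Fin M => κ (i.val + 1)) * Kᵀ →
      Θᵀ = Θ ∧ Θ.PosDef ∧ IsUnit Θ ∧
      (zigzag M a c)ᵀ * Θ = Θ * zigzag M a c := by
  intro K Θ hK hΘ
  set q : ℕ → ℝ := fun k => (-1 : ℝ) ^ k * c k / (a k - a (k + 1)) with hq
  set N : Matrix (Fin M) (Fin M) ℝ := zigzag M (fun _ => 0) q with hN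
  set S : Matrix (Fin M) (Fin M) ℝ := zigzag M (fun _ => 1) q with hS
  set D : Matrix (Fin M) (Fin M) ℝ :=
    Matrix.diagonal (fun i : Fin M => κ (i.val + 1)) with hD
  set Da : Matrix (Fin M) (Fin M) ℝ :=
    Matrix.diagonal (fun i : Fin M => a (i.val + 1)) with hDa
  -- S = 1 + N
  have hS1N : S = 1 + N := by
    rw [hS, zigzag_split, hN]
    congr 1
  have hNN : N * N = 0 := zigzag_off_mul M q q
  -- invertibility of S
  have hSinv : S * (1 - N) = 1 := by
    rw [hS1N]
    have : (1 + N) * (1 - N) = 1 - N * N := by noncomm_ring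
    rw [this, hNN, sub_zero]
  have hSinv' : (1 - N) * S = 1 := by
    rw [hS1N]
    have : (1 - N) * (1 + N) = 1 - N * N := by noncomm_ring
    rw [this, hNN, sub_zero]
  have hSunit : IsUnit S := ⟨⟨S, 1 - N, hSinv, hSinv'⟩, rfl⟩
  -- key conjugation identity : S * H = Da * S
  have hH : zigzag M a c = Da + zigzag M (fun _ => 0) c := zigzag_split M a c
  have hkey : Da * N - N * Da = zigzag M (fun _ => 0) c := zigzag_key M a c ha
  have hkey' : zigzag M (fun _ => 0) c + N * Da = Da * N := by
    rw [← hkey]; noncomm_ring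
  have hSH : S * zigzag M a c = Da * S := by
    have hNc : N * zigzag M (fun _ => 0) c = 0 := zigzag_off_mul M q c
    rw [hH, hS1N]
    calc (1 + N) * (Da + zigzag M (fun _ => 0) c)
        = Da + (zigzag M (fun _ => 0) c + N * Da) + N * zigzag M (fun _ => 0) c := by
          noncomm_ring
      _ = Da + Da * N + 0 := by rw [hkey', hNc]
      _ = Da * (1 + N) := by noncomm_ring
  -- Θ = Sᵀ * D * S
  have hKT : Kᵀ = S := by rw [hK, Matrix.transpose_transpose]
  have hΘ' : Θ = Sᵀ * D * S := by rw [hΘ, hK, Matrix.transpose_transpose]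
  -- diagonal facts
  have hDaT : Daᵀ = Da := Matrix.diagonal_transpose _
  have hcomm : Da * D = D * Da := by
    rw [hDa, hD, Matrix.diagonal_mul_diagonal, Matrix.diagonal_mul_diagonal]
    exact congrArg Matrix.diagonal (funext fun i => mul_comm _ _)
  -- symmetry
  have hsymm : Θᵀ = Θ := by
    rw [hΘ']
    simp [Matrix.transpose_mul, Matrix.mul_assoc, hD]
  refine ⟨hsymm, ?_, ?_, ?_⟩
  · -- positive definiteness
    have hDpos : D.PosDef := by
      rw [hD]
      exact Matrix.PosDef.diagonal fun i => hκ (i.val + 1) (by omega) (by omega)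
    have hconj := posDef_conj hDpos hSunit
    rwa [Matrix.conjTranspose_eq_transpose_of_trivial, ← hΘ'] at hconj
  · -- invertibility
    have hDpos : D.PosDef := by
      rw [hD]
      exact Matrix.PosDef.diagonal fun i => hκ (i.val + 1) (by omega) (by omega)
    have hconj := posDef_conj hDpos hSunit
    rw [Matrix.conjTranspose_eq_transpose_of_trivial, ← hΘ'] at hconj
    exact hconj.isUnit
  · -- the metric condition
    have hHT : (zigzag M a c)ᵀ * Sᵀ = Sᵀ * Da := by
      rw [← Matrix.transpose_mul, hSH, Matrix.transpose_mul, hDaT]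
    calc (zigzag M a c)ᵀ * Θ
        = (zigzag M a c)ᵀ * Sᵀ * (D * S) := by
          rw [hΘ']; simp only [Matrix.mul_assoc]
      _ = Sᵀ * Da * (D * S) := by rw [hHT]
      _ = Sᵀ * (Da * D) * S := by simp only [Matrix.mul_assoc]
      _ = Sᵀ * (D * Da) * S := by rw [hcomm]
      _ = Sᵀ * D * (Da * S) := by simp only [Matrix.mul_assoc]
      _ = Sᵀ * D * (S * zigzag M a c) := by rw [hSH]
      _ = Θ * zigzag M a c := by rw [hΘ']; simp only [Matrix.mul_assoc]
end

section
/- Let a_k ≠ a_{k+1} for k = 1,…,M−1, define q ∈ ℝ^{M-1} by q_k = (−1)^k c_k/(a_k − a_{k+1}), let 𝟙 ∈ ℝ^M be the all-ones vector, K = (Z(𝟙,q))^T, and for κ ∈ ℝ^M set Θ = K · diag(κ_1,…,κ_M) · K^T. Then Θ is symmetric, pentadiagonal, and its entries are given explicitly by (1-based indices): Θ[m,n] = 0 whenever |m−n| > 2; Θ[m,m] = κ_m for even m; Θ[m,m] = κ_m + q_{m-1}^2 κ_{m-1} + q_m^2 κ_{m+1} for odd m (the term q_{m-1}^2 κ_{m-1}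 present only when m ≥ 2 and the term q_m^2 κ_{m+1} only when m ≤ M−1); Θ[m,m+1] = Θ[m+1,m] = q_m κ_{m+1} for odd m ≤ M−1 and Θ[m,m+1] = Θ[m+1,m] = q_m κ_m for even m ≤ M−1; Θ[m,m+2] = Θ[m+2,m] = q_m q_{m+1} κ_{m+1} for odd m ≤ M−2 and Θ[m,m+2] = 0 for even m ≤ M−2. In particular Θ decomposes as the sum of a diagonal part (with entries κ_m), a tridiagonal part linear in the q's, and a pentadiagonal part quadratic in the q's. -/
open Matrix

lemma sum_if_val {M : ℕ} (v : ℕ) (X : ℝ) :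
    ∑ k : Fin M, (if k.val = v then X else 0) = if v < M then X else 0 := by
  split_ifs with h
  · rw [Finset.sum_eq_single_of_mem (⟨v, h⟩ : Fin M) (Finset.mem_univ _)]
    · simp
    · intro b _ hb
      simp only [ite_eq_right_iff]
      intro hbv
      exact absurd (Fin.ext hbv) hb
  · apply Finset.sum_eq_zero
    intro k _
    have := k.isLt
    simp only [ite_eq_right_iff]
    intro hk; omega

lemma sum_if_val_succ {M : ℕ} (v : ℕ) (X : ℝ) :
    ∑ k : Fin M, (if k.val + 1 = v then X else 0) = if 1 ≤ v ∧ v ≤ M then X else 0 := by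
  cases v with
  | zero => simp
  | succ w =>
    have : ∀ k : Fin M, (if k.val + 1 = w + 1 then X else 0) = (if k.val = w then X else 0) := by
      intro k; simp
    rw [Finset.sum_congr rfl (fun k _ => this k), sum_if_val]
    have : w < M ↔ 1 ≤ w + 1 ∧ w + 1 ≤ M := by omega
    simp only [this]

lemma theta_apply {M : ℕ} (q κf : ℕ → ℝ) (i j : Fin M) :
    ((zigzag M (fun _ => 1) q)ᵀ * Matrix.diagonal (fun i : Fin M => κf (i.val + 1))
      * ((zigzag M (fun _ => 1) q)ᵀ)ᵀ) i j
    = ∑ k : Fin M, zigzag M (fun _ => 1) q k i * κf (k.val + 1)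
        * zigzag M (fun _ => 1) q k j := by
  rw [Matrix.mul_apply]
  apply Finset.sum_congr rfl
  intro k _
  simp [Matrix.mul_diagonal, Matrix.transpose_apply]
  try ring

section main
variable {M : ℕ} (q κf : ℕ → ℝ)

local notation "Z" => zigzag M (fun _ => 1) q

lemma far (i j : Fin M) (h : i.val + 3 ≤ j.val ∨ j.val + 3 ≤ i.val) :
    ∑ k : Fin M, Z k i * κf (k.val + 1) * Z k j = 0 := by
  apply Finset.sum_eq_zero
  intro k _
  simp only [zigzag, Matrix.of_apply]
  split_ifs <;> first | (exfalso; omega) | ring1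

lemma diag_even (i : Fin M) (h : (i.val + 1) % 2 = 0) :
    ∑ k : Fin M, Z k i * κf (k.val + 1) * Z k i = κf (i.val + 1) := by
  rw [Finset.sum_eq_single_of_mem i (Finset.mem_univ _)]
  · simp [zigzag]
  · intro k _ hne
    have hk : k.val ≠ i.val := fun hh => hne (Fin.ext hh)
    simp only [zigzag, Matrix.of_apply]
    split_ifs <;> first | (exfalso; omega) | ring1

lemma diag_odd (i : Fin M) (h : (i.val + 1) % 2 = 1) :
    ∑ k : Fin M, Z k i * κf (k.val + 1) * Z k i
      = κf (i.val + 1)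
        + (if 1 ≤ i.val then q i.val ^ 2 * κf i.val else 0)
        + (if i.val + 2 ≤ M then q (i.val + 1) ^ 2 * κf (i.val + 2) else 0) := by
  have hpt : ∀ k : Fin M, Z k i * κf (k.val + 1) * Z k i =
      (if k.val = i.val then κf (i.val + 1) else 0)
      + (if k.val + 1 = i.val then q i.val ^ 2 * κf i.val else 0)
      + (if k.val = i.val + 1 then q (i.val + 1) ^ 2 * κf (i.val + 2) else 0) := by
    intro k
    simp only [zigzag, Matrix.of_apply]
    split_ifs <;>
      first
        | (exfalso; omega)
        | ring1
        | (rw [show k.val = i.val from by omega]; ring)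
        | (rw [show i.val = k.val + 1 from by omega]; ring)
        | (rw [show k.val = i.val + 1 from by omega]; ring)
  rw [Finset.sum_congr rfl (fun k _ => hpt k), Finset.sum_add_distrib,
    Finset.sum_add_distrib, sum_if_val, sum_if_val_succ, sum_if_val]
  have h1 : i.val < M := i.isLt
  have h2 : (1 ≤ i.val ∧ i.val ≤ M) ↔ 1 ≤ i.val := by omega
  have h3 : i.val + 1 < M ↔ i.val + 2 ≤ M := by omega
  simp [h1, h2, h3]

lemma super (i j : Fin M) (h : j.val = i.val + 1) :
    ∑ k : Fin M, Z k i * κf (k.val + 1) * Z k j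
      = if (i.val + 1) % 2 = 1 then q (i.val + 1) * κf (i.val + 2)
        else q (i.val + 1) * κf (i.val + 1) := by
  by_cases hp : (i.val + 1) % 2 = 1
  · rw [if_pos hp, Finset.sum_eq_single_of_mem j (Finset.mem_univ _)]
    · have hji : ¬ (j.val = i.val) := by omega
      have hj2 : (j.val + 1) % 2 = 0 := by omega
      have hj3 : i.val + 1 = j.val := h.symm
      have e1 : Z j i = q (i.val + 1) := by
        simp only [zigzag, Matrix.of_apply]; rw [if_neg hji, if_pos ⟨hj2, hj3⟩]
      have e2 : Z j j = (1 : ℝ) := by simp [zigzag]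
      rw [e1, e2, show j.val + 1 = i.val + 2 by omega]
      ring
    · intro k _ hne
      have hk : k.val ≠ j.val := fun hh => hne (Fin.ext hh)
      simp only [zigzag, Matrix.of_apply]
      split_ifs <;> first | (exfalso; omega) | ring1
  · rw [if_neg hp, Finset.sum_eq_single_of_mem i (Finset.mem_univ _)]
    · have hij : ¬ (i.val = j.val) := by omega
      have e1 : Z i i = (1 : ℝ) := by simp [zigzag]
      have e2 : Z i j = q (i.val + 1) := by
        simp only [zigzag, Matrix.of_apply]
        rw [if_neg hij, if_neg (by omega : ¬ ((i.val + 1) % 2 = 0 ∧ j.val + 1 = i.val)),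
          if_pos ⟨by omega, h⟩]
      rw [e1, e2]
      ring
    · intro k _ hne
      have hk : k.val ≠ i.val := fun hh => hne (Fin.ext hh)
      simp only [zigzag, Matrix.of_apply]
      split_ifs <;> first | (exfalso; omega) | ring1

lemma super2 (i j : Fin M) (h : j.val = i.val + 2) :
    ∑ k : Fin M, Z k i * κf (k.val + 1) * Z k j
      = if (i.val + 1) % 2 = 1 then q (i.val + 1) * q (i.val + 2) * κf (i.val + 2)
        else 0 := by
  by_cases hp : (i.val + 1) % 2 = 1
  · have hm : i.val + 1 < M := by have := j.isLt; omega
    rw [if_pos hp, Finset.sum_eq_single_of_mem (⟨i.val + 1, hm⟩ : Fin M) (Finset.mem_univ _)]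
    · have hv : ((⟨i.val + 1, hm⟩ : Fin M) : ℕ) = i.val + 1 := rfl
      have e1 : Z ⟨i.val + 1, hm⟩ i = q (i.val + 1) := by
        simp only [zigzag, Matrix.of_apply, hv, and_true, true_and]
        split_ifs <;> first | rfl | (exfalso; omega)
      have e2 : Z ⟨i.val + 1, hm⟩ j = q (i.val + 2) := by
        simp only [zigzag, Matrix.of_apply, hv, and_true, true_and]
        split_ifs <;> first | rfl | (exfalso; omega)
      rw [e1, e2, hv]
      ring
    · intro k _ hne
      have hk : k.val ≠ i.val + 1 := fun hh => hne (Fin.ext hh)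
      simp only [zigzag, Matrix.of_apply]
      split_ifs <;> first | (exfalso; omega) | ring1
  · rw [if_neg hp]
    apply Finset.sum_eq_zero
    intro k _
    simp only [zigzag, Matrix.of_apply]
    split_ifs <;> first | (exfalso; omega) | ring1

end main


/-- Explicit entries of the metric `Θ = K · diag(κ) · Kᵀ`, where
`K = Z(𝟙,q)ᵀ` and `q_k = (-1)^k c_k/(a_k - a_{k+1})` (indices 1-based; row
`i : Fin M` carries the label `m = i.val + 1`).  `Θ` is symmetric and
pentadiagonal, with: `Θ[m,n] = 0` for `|m-n| > 2`; `Θ[m,m] = κ_m` for even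
`m`; `Θ[m,m] = κ_m + q_{m-1}² κ_{m-1} + q_m² κ_{m+1}` for odd `m` (first
extra term only for `m ≥ 2`, second only for `m ≤ M-1`);
`Θ[m,m+1] = Θ[m+1,m] = q_m κ_{m+1}` for odd `m`, `= q_m κ_m` for even `m`;
`Θ[m,m+2] = Θ[m+2,m] = q_m q_{m+1} κ_{m+1}` for odd `m`, `= 0` for even `m`.
Thus `Θ` is a sum of a diagonal part, a tridiagonal part linear in the `q`'s,
and a pentadiagonal part quadratic in the `q`'s. -/
theorem zigzag_metric_entries (M : ℕ) (a c κ : ℕ → ℝ)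
    (ha : ∀ k, 1 ≤ k → k + 1 ≤ M → a k ≠ a (k + 1)) :
    ∀ q : ℕ → ℝ,
      q = (fun k => (-1 : ℝ) ^ k * c k / (a k - a (k + 1))) →
    ∀ K Θ : Matrix (Fin M) (Fin M) ℝ,
      K = (zigzag M (fun _ => 1) q)ᵀ →
      Θ = K * Matrix.diagonal (fun i : Fin M => κ (i.val + 1)) * Kᵀ →
      Θᵀ = Θ ∧
      (∀ i j : Fin M, i.val + 3 ≤ j.val ∨ j.val + 3 ≤ i.val → Θ i j = 0) ∧
      (∀ i : Fin M, (i.val + 1) % 2 = 0 → Θ i i = κ (i.val + 1)) ∧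
      (∀ i : Fin M, (i.val + 1) % 2 = 1 →
        Θ i i = κ (i.val + 1)
          + (if 1 ≤ i.val then q i.val ^ 2 * κ i.val else 0)
          + (if i.val + 2 ≤ M then q (i.val + 1) ^ 2 * κ (i.val + 2) else 0)) ∧
      (∀ i j : Fin M, j.val = i.val + 1 →
        Θ i j = (if (i.val + 1) % 2 = 1 then q (i.val + 1) * κ (i.val + 2)
                 else q (i.val + 1) * κ (i.val + 1)) ∧
        Θ j i = (if (i.val + 1) % 2 = 1 then q (i.val + 1) * κ (i.val + 2)
                 else q (i.val + 1) * κ (i.val + 1))) ∧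
      (∀ i j : Fin M, j.val = i.val + 2 →
        Θ i j = (if (i.val + 1) % 2 = 1 then
                   q (i.val + 1) * q (i.val + 2) * κ (i.val + 2)
                 else 0) ∧
        Θ j i = (if (i.val + 1) % 2 = 1 then
                   q (i.val + 1) * q (i.val + 2) * κ (i.val + 2)
                 else 0)) := by
  intro q hq K Θ hK hΘ
  subst hK hΘ
  have comm : ∀ i j : Fin M,
      (∑ k : Fin M, zigzag M (fun _ => 1) q k j * κ (k.val + 1) * zigzag M (fun _ => 1) q k i)
      = ∑ k : Fin M, zigzag M (fun _ => 1) q k i * κ (k.val + 1) * zigzag M (fun _ => 1) q k j :=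
    fun i j => Finset.sum_congr rfl (fun k _ => by ring)
  refine ⟨?_, ?_, ?_, ?_, ?_, ?_⟩
  · simp [Matrix.transpose_mul, Matrix.transpose_transpose, Matrix.diagonal_transpose,
      Matrix.mul_assoc]
  · intro i j hij
    rw [theta_apply]
    exact far q κ i j hij
  · intro i h
    rw [theta_apply]
    exact diag_even q κ i h
  · intro i h
    rw [theta_apply]
    exact diag_odd q κ i h
  · intro i j hij
    constructor
    · rw [theta_apply]
      exact super q κ i j hij
    · rw [theta_apply, comm]
      exact super q κ i j hij
  · intro i j hij
    constructor
    · rw [theta_apply]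
      exact super2 q κ i j hij
    · rw [theta_apply, comm]
      exact super2 q κ i j hij
end
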